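/- arXiv:1405.2530 — 8 statements merged into one kernel-verified Lean document; each statement's English description precedes it below -/
import Mathlib

section
/- Let α be an assignment of jobs to machines whose makespan is at most 2T and whose average machine load equals L, where 0 < L ≤ T. Let γ ≥ 1 and let k = |Bad(α,γ)| be the number of machines whose load exceeds T + γ·L. Then k < m/(γ+1). -/
/-- The load of machine `i` under assignment `α`, with processing times `p i j`. -/
noncomputable def mload {Mach J : Type*} [Fintype J] [DecidableEq Mach]
    (p : Mach → J → ℝ) (α : J → Mach) (i : Mach) : ℝ :=
  ∑ j ∈ Finset.univ.filter (fun j => α j = i), p i j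

/-! Each bad machine carries more than `T + γL ≥ (γ + 1)L`, and all loads are nonnegative, so
the bad machines alone carry more than `k (γ + 1) L` whenever `k > 0`; since the total load
is `mL`, this forces `k (γ + 1) < m`. -/

open Finset

theorem Finset.card_filter_lt_mul_lt_sum {ι : Type*} (s : Finset ι) (f : ι → ℝ) (t : ℝ)
    (hf : ∀ i ∈ s, 0 ≤ f i) (hsum : 0 < ∑ i ∈ s, f i) :
    (#(s.filter (t < f ·)) : ℝ) * t < ∑ i ∈ s, f i := by
  rcases (s.filter (t < f ·)).eq_empty_or_nonempty with hempty | hne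
  · simpa [hempty] using hsum
  · calc (#(s.filter (t < f ·)) : ℝ) * t
        = ∑ _ ∈ s.filter (t < f ·), t := by rw [sum_const, nsmul_eq_mul]
      _ < ∑ i ∈ s.filter (t < f ·), f i :=
          sum_lt_sum_of_nonempty hne fun i hi => (mem_filter.mp hi).2
      _ ≤ ∑ i ∈ s, f i :=
          sum_le_sum_of_subset_of_nonneg (filter_subset _ s) fun i hi _ => hf i hi

theorem mload_nonneg {Mach J : Type*} [Fintype J] [DecidableEq Mach]
    {p : Mach → J → ℝ} (hp : ∀ i j, 0 ≤ p i j) (α : J → Mach) (i : Mach) :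
    0 ≤ mload p α i :=
  sum_nonneg fun j _ => hp i j

theorem bad_machines_card_lt_general {Mach J : Type*} [Fintype Mach]
    [Fintype J] [DecidableEq Mach]
    (p : Mach → J → ℝ) (hp : ∀ i j, 0 ≤ p i j)
    (α : J → Mach) (T L γ : ℝ)
    (hL : 0 < L) (hLT : L ≤ T) (hγ : 1 ≤ γ)
    (havg : (∑ i, mload p α i) / (Fintype.card Mach : ℝ) = L) :
    (((Finset.univ.filter (fun i => T + γ * L < mload p α i)).card : ℝ))
      < (Fintype.card Mach : ℝ) / (γ + 1) := by
  set m : ℝ := (Fintype.card Mach : ℝ)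
  set k : ℝ := (#(univ.filter (fun i => T + γ * L < mload p α i)) : ℝ)
  -- `m = 0` would make the average `0 / 0 = 0`, contradicting `0 < L`.
  have hm : m ≠ 0 := by
    rintro hm
    rw [hm, div_zero] at havg
    exact hL.ne havg
  have htotal : ∑ i, mload p α i = m * L := by
    rw [← havg, mul_div_cancel₀ _ hm]
  have htotal_pos : 0 < ∑ i, mload p α i := by
    rw [htotal]
    exact mul_pos (lt_of_le_of_ne (Nat.cast_nonneg _) (Ne.symm hm)) hL
  have hcount : k * (T + γ * L) < m * L := htotal ▸
    card_filter_lt_mul_lt_sum univ (mload p α) _ (fun i _ => mload_nonneg hp α i) htotal_pos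
  have hk : k * (γ + 1) * L < m * L := calc
    k * (γ + 1) * L = k * ((γ + 1) * L) := mul_assoc _ _ _
    _ ≤ k * (T + γ * L) := mul_le_mul_of_nonneg_left (by linarith) (Nat.cast_nonneg _)
    _ < m * L := hcount
  rw [lt_div_iff₀ (by linarith)]
  exact lt_of_mul_lt_mul_right hk hL.le

/-- If `α` has makespan at most `2T` and average machine load `L`,
`0 < L ≤ T`, `γ ≥ 1`, and `k` is the number of machines with load `> T + γL`
(the bad machines), then `k < m / (γ + 1)`. -/
theorem bad_machines_card_lt {Mach J : Type*} [Fintype Mach] [Nonempty Mach]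
    [Fintype J] [DecidableEq Mach]
    (p : Mach → J → ℝ) (hp : ∀ i j, 0 ≤ p i j)
    (α : J → Mach) (T L γ : ℝ)
    (hL : 0 < L) (hLT : L ≤ T) (hγ : 1 ≤ γ)
    (hmak : ∀ i, mload p α i ≤ 2 * T)
    (havg : (∑ i, mload p α i) / (Fintype.card Mach : ℝ) = L) :
    (((Finset.univ.filter (fun i => T + γ * L < mload p α i)).card : ℝ))
      < (Fintype.card Mach : ℝ) / (γ + 1) :=
  bad_machines_card_lt_general p hp α T L γ hL hLT hγ havg
end

section
/- Let α be an assignment of jobs to machines whose makespan is at most 2T and whose average machine load equals L, where 0 < L ≤ T. Let γ ≥ 1, let k = |Bad(α,γ)| be the number of machines whose load exceeds T + γ·L, and let Good(α,γ) be the set of machines whose load is at most γ·L. Then |Good(α,γ)| > (1 − 1/γ)·m + (k/γ)·(T/L). -/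
open Finset

lemma ite_add_ite_le_of_nonneg {x : ℝ} (hx : 0 ≤ x) (c t : ℝ) :
    (if c < x then c else 0) + (if c + t < x then t else 0) ≤ x := by
  split_ifs <;> linarith

lemma ite_add_ite_lt_of_pos {x : ℝ} (hx : 0 < x) (c t : ℝ) :
    (if c < x then c else 0) + (if c + t < x then t else 0) < x := by
  split_ifs <;> linarith

theorem mul_card_filter_add_mul_card_filter_lt_sum {ι : Type*} (s : Finset ι) {f : ι → ℝ}
    (hf : ∀ i ∈ s, 0 ≤ f i) (hpos : 0 < ∑ i ∈ s, f i) (c t : ℝ) :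
    c * #(s.filter (c < f ·)) + t * #(s.filter (c + t < f ·)) < ∑ i ∈ s, f i := by
  have hcount : c * #(s.filter (c < f ·)) + t * #(s.filter (c + t < f ·))
      = ∑ i ∈ s, ((if c < f i then c else 0) + (if c + t < f i then t else 0)) := by
    rw [sum_add_distrib, ← sum_filter, ← sum_filter, sum_const, sum_const, nsmul_eq_mul,
      nsmul_eq_mul, mul_comm c, mul_comm t]
  obtain ⟨i, hi, hfi⟩ : ∃ i ∈ s, 0 < f i := by
    by_contra! h
    exact (sum_nonpos h).not_gt hpos
  rw [hcount]
  exact sum_lt_sum (fun j hj => ite_add_ite_le_of_nonneg (hf j hj) c t)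
    ⟨i, hi, ite_add_ite_lt_of_pos hfi c t⟩

theorem good_machines_card_gt_general {Mach J : Type*} [Fintype Mach]
    [Fintype J] [DecidableEq Mach]
    (p : Mach → J → ℝ) (hp : ∀ i j, 0 ≤ p i j)
    (α : J → Mach) (T L γ : ℝ)
    (hL : 0 < L) (hγ : 1 ≤ γ)
    (havg : (∑ i, mload p α i) / (Fintype.card Mach : ℝ) = L) :
    (1 - 1 / γ) * (Fintype.card Mach : ℝ)
        + (((Finset.univ.filter (fun i => T + γ * L < mload p α i)).card : ℝ) / γ) * (T / L)
      < ((Finset.univ.filter (fun i => mload p α i ≤ γ * L)).card : ℝ) := by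
  set m : ℝ := (Fintype.card Mach : ℝ)
  -- With no machines, `havg` would read `0 / 0 = L`, i.e. `L = 0`.
  have hm : 0 < m := by
    refine (Nat.cast_nonneg _).lt_of_ne fun h => ?_
    rw [show m = 0 from h.symm, div_zero] at havg
    exact hL.ne havg
  have htotal : ∑ i, mload p α i = m * L := by rw [← havg, mul_div_cancel₀ _ hm.ne']
  have hcount := mul_card_filter_add_mul_card_filter_lt_sum univ (f := mload p α)
    (fun i _ => sum_nonneg fun j _ => hp i j) (htotal ▸ mul_pos hm hL) (γ * L) T
  rw [add_comm (γ * L), htotal] at hcount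
  set G := univ.filter (fun i => mload p α i ≤ γ * L)
  set NG := univ.filter (fun i => γ * L < mload p α i)
  set B := univ.filter (fun i => T + γ * L < mload p α i)
  have hsplit : m - #G = #NG := by
    have := card_filter_add_card_filter_not (s := univ) (fun i => mload p α i ≤ γ * L)
    simp only [not_le, card_univ] at this
    rw [sub_eq_iff_eq_add', ← Nat.cast_add, this]
  have hγL : 0 < γ * L := by positivity
  calc (1 - 1 / γ) * m + (#B / γ) * (T / L) = m - (m * L - T * #B) / (γ * L) := by
        field_simp
        ring
    _ < #G := by
        rw [sub_lt_comm, lt_div_iff₀ hγL, hsplit]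
        linarith

/-- If `α` has makespan at most `2T` and average machine load `L`,
`0 < L ≤ T`, `γ ≥ 1`, `k` is the number of machines with load `> T + γL`, and
`Good(α,γ)` is the set of machines with load at most `γL`, then
`|Good(α,γ)| > (1 - 1/γ)·m + (k/γ)·(T/L)`. -/
theorem good_machines_card_gt {Mach J : Type*} [Fintype Mach] [Nonempty Mach]
    [Fintype J] [DecidableEq Mach]
    (p : Mach → J → ℝ) (hp : ∀ i j, 0 ≤ p i j)
    (α : J → Mach) (T L γ : ℝ)
    (hL : 0 < L) (hLT : L ≤ T) (hγ : 1 ≤ γ)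
    (hmak : ∀ i, mload p α i ≤ 2 * T)
    (havg : (∑ i, mload p α i) / (Fintype.card Mach : ℝ) = L) :
    (1 - 1 / γ) * (Fintype.card Mach : ℝ)
        + (((Finset.univ.filter (fun i => T + γ * L < mload p α i)).card : ℝ) / γ) * (T / L)
      < ((Finset.univ.filter (fun i => mload p α i ≤ γ * L)).card : ℝ) :=
  good_machines_card_gt_general p hp α T L γ hL hγ havg
end

section
/- Let α be an assignment of jobs to machines whose makespan is at most 2T and whose average machine load equals L, where 0 < L ≤ T. Suppose the instance has feasibility factor ε ∈ (0,1] with respect to T, i.e., every job is legal on at least ε·m machines, and suppose ε ≥ L/T. Let k = |Bad(α,1/ε)|. Then for every job j, the number of machines in Good(α,1/ε) that are legal for j satisfies |Good_j(α,1/ε)| > ε·k·(T/L); in particular |Good_j(α,1/ε)| ≥ k. -/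
open Finset

section Counting

variable {ι : Type*} [Fintype ι]

theorem filter_add_lt_subset_filter_lt (f : ι → ℝ) {a : ℝ} (c : ℝ) (ha : 0 ≤ a) :
    ({i | a + c < f i} : Finset ι) ⊆ ({i | c < f i} : Finset ι) :=
  monotone_filter_right _ fun i _ (hi : a + c < f i) => (show c < f i by linarith)

theorem card_mul_add_card_mul_lt_sum_filter (f : ι → ℝ) {a c : ℝ} (ha : 0 ≤ a)
    (hS : ({i | c < f i} : Finset ι).Nonempty) :
    #{i | a + c < f i} * a + #{i | c < f i} * c < ∑ i ∈ {i | c < f i}, f i := by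
  classical
  set S : Finset ι := {i | c < f i}
  set B : Finset ι := {i | a + c < f i}
  calc (#B : ℝ) * a + #S * c = ∑ i ∈ S, ((if i ∈ B then a else 0) + c) := by
        rw [sum_add_distrib, sum_ite_mem,
          inter_eq_right.mpr (filter_add_lt_subset_filter_lt f c ha), sum_const, sum_const,
          nsmul_eq_mul, nsmul_eq_mul]
    _ < ∑ i ∈ S, f i := sum_lt_sum_of_nonempty hS fun i hi => by
        split_ifs with hiB
        · simpa [B] using hiB
        · simpa [S] using hi

theorem card_mul_add_card_mul_lt_sum {f : ι → ℝ} (hf : ∀ i, 0 ≤ f i) (hpos : 0 < ∑ i, f i)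
    {a c : ℝ} (ha : 0 ≤ a) :
    #{i | a + c < f i} * a + #{i | c < f i} * c < ∑ i, f i := by
  obtain hS | hS := ({i | c < f i} : Finset ι).eq_empty_or_nonempty
  · have hB : ({i | a + c < f i} : Finset ι) = ∅ :=
      subset_empty.mp (hS ▸ filter_add_lt_subset_filter_lt f c ha)
    simpa [hS, hB] using hpos
  · exact (card_mul_add_card_mul_lt_sum_filter f ha hS).trans_le
      (sum_le_univ_sum_of_nonneg hf)

theorem card_filter_le_card_filter_le_and_add (g : ι → ℝ) (c : ℝ) (P : ι → Prop)
    [DecidablePred P] : #{i | P i} ≤ #{i | g i ≤ c ∧ P i} + #{i | c < g i} := by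
  classical
  calc #{i | P i} ≤ #(({i | P i} : Finset ι) \ ({i | c < g i} : Finset ι)) + #{i | c < g i} :=
        card_le_card_sdiff_add_card
    _ ≤ #{i | g i ≤ c ∧ P i} + #{i | c < g i} := by
        gcongr
        intro i
        simp only [mem_sdiff, mem_filter, mem_univ, true_and, not_lt]
        exact And.symm

end Counting

theorem good_machines_for_job_general {Mach J : Type*} [Fintype Mach]
    [Fintype J] [DecidableEq Mach]
    (p : Mach → J → ℝ) (hp : ∀ i j, 0 ≤ p i j)
    (α : J → Mach) (T L ε : ℝ)
    (hL : 0 < L) (hLT : L ≤ T)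
    (hε0 : 0 < ε) (hεLT : L / T ≤ ε)
    (hfeas : ∀ j : J, ε * (Fintype.card Mach : ℝ)
      ≤ ((Finset.univ.filter (fun i => p i j ≤ T)).card : ℝ))
    (havg : (∑ i, mload p α i) / (Fintype.card Mach : ℝ) = L) :
    ∀ j : J,
      ε * ((Finset.univ.filter (fun i => T + (1 / ε) * L < mload p α i)).card : ℝ) * (T / L)
          < ((Finset.univ.filter
              (fun i => mload p α i ≤ (1 / ε) * L ∧ p i j ≤ T)).card : ℝ)
      ∧ (Finset.univ.filter (fun i => T + (1 / ε) * L < mload p α i)).card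
          ≤ (Finset.univ.filter
              (fun i => mload p α i ≤ (1 / ε) * L ∧ p i j ≤ T)).card := by
  intro j
  have hT : 0 < T := hL.trans_le hLT
  have hm : (Fintype.card Mach : ℝ) ≠ 0 := fun hm => hL.ne (by simpa [hm] using havg)
  have hsum : ∑ i, mload p α i = Fintype.card Mach * L := by
    rw [← havg, mul_div_cancel₀ _ hm]
  have hbad := card_mul_add_card_mul_lt_sum (f := mload p α) (c := 1 / ε * L)
    (fun i => sum_nonneg fun j _ => hp i j) (hsum ▸ mul_pos (by positivity) hL) hT.le
  have hgood := card_filter_le_card_filter_le_and_add (mload p α) (1 / ε * L) (p · j ≤ T)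
  set k := #{i | T + 1 / ε * L < mload p α i}
  set b := #{i | 1 / ε * L < mload p α i}
  set g := #{i | mload p α i ≤ 1 / ε * L ∧ p i j ≤ T}
  have hkb : ε * k * (T / L) + b < ε * Fintype.card Mach :=
    calc ε * k * (T / L) + b = (k * T + b * (1 / ε * L)) * (ε / L) := by field_simp
      _ < Fintype.card Mach * L * (ε / L) :=
        mul_lt_mul_of_pos_right (hsum ▸ hbad) (div_pos hε0 hL)
      _ = ε * Fintype.card Mach := by field_simp
  have hkg : ε * k * (T / L) < g := by
    have : (#{i | p i j ≤ T} : ℝ) ≤ g + b := by exact_mod_cast hgood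
    linarith [hfeas j]
  refine ⟨hkg, ?_⟩
  have hεT : 1 ≤ ε * (T / L) := by
    rw [mul_div_assoc', one_le_div₀ hL]
    exact (div_le_iff₀ hT).mp hεLT
  have hk : (k : ℝ) ≤ ε * k * (T / L) :=
    (le_mul_of_one_le_left k.cast_nonneg hεT).trans_eq (mul_right_comm ..)
  exact_mod_cast (hk.trans_lt hkg).le

/-- Suppose `α` has makespan at most `2T` and average machine load
`L`, `0 < L ≤ T`, the instance has feasibility factor `ε ∈ (0,1]` w.r.t. `T`
(every job is legal, i.e. has processing time at most `T`, on at least `ε·m`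
machines), and `ε ≥ L/T`.  Let `k = |Bad(α,1/ε)|` (machines with load
`> T + (1/ε)·L`).  Then for every job `j`, the number of machines in
`Good(α,1/ε)` (load at most `(1/ε)·L`) that are legal for `j` is
`> ε·k·(T/L)`, and in particular it is `≥ k`. -/
theorem good_machines_for_job {Mach J : Type*} [Fintype Mach] [Nonempty Mach]
    [Fintype J] [DecidableEq Mach]
    (p : Mach → J → ℝ) (hp : ∀ i j, 0 ≤ p i j)
    (α : J → Mach) (T L ε : ℝ)
    (hL : 0 < L) (hLT : L ≤ T)
    (hε0 : 0 < ε) (hε1 : ε ≤ 1) (hεLT : L / T ≤ ε)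
    (hfeas : ∀ j : J, ε * (Fintype.card Mach : ℝ)
      ≤ ((Finset.univ.filter (fun i => p i j ≤ T)).card : ℝ))
    (hmak : ∀ i, mload p α i ≤ 2 * T)
    (havg : (∑ i, mload p α i) / (Fintype.card Mach : ℝ) = L) :
    ∀ j : J,
      ε * ((Finset.univ.filter (fun i => T + (1 / ε) * L < mload p α i)).card : ℝ) * (T / L)
          < ((Finset.univ.filter
              (fun i => mload p α i ≤ (1 / ε) * L ∧ p i j ≤ T)).card : ℝ)
      ∧ (Finset.univ.filter (fun i => T + (1 / ε) * L < mload p α i)).card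
          ≤ (Finset.univ.filter
              (fun i => mload p α i ≤ (1 / ε) * L ∧ p i j ≤ T)).card :=
  good_machines_for_job_general p hp α T L ε hL hLT hε0 hεLT hfeas havg
end

section
/- Let α be an assignment of jobs to machines whose makespan is at most 2T and whose average machine load equals L, where 0 < L ≤ T. Suppose the instance has feasibility factor ε ∈ (0,1] with respect to T and ε ≥ L/T. For each machine i ∈ Bad(α,1/ε), let j_max^i denote a job assigned to i of maximum processing time on i. Then for every subset A ⊆ Bad(α,1/ε), the neighborhood N(A) = ∪_{i∈A} Good_{j_max^i}(α,1/ε) satisfies |N(A)| ≥ |A|. -/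
open Finset

theorem card_mul_add_card_mul_le_sum {ι : Type*} [Fintype ι] [DecidableEq ι] {f : ι → ℝ}
    (hf : ∀ i, 0 ≤ f i) {A K : Finset ι} (hAK : A ⊆ K) {a b : ℝ}
    (hA : ∀ i ∈ A, a + b ≤ f i) (hK : ∀ i ∈ K, b ≤ f i) :
    #A * a + #K * b ≤ ∑ i, f i := by
  have hKA : #(K \ A) • b ≤ ∑ i ∈ K \ A, f i :=
    card_nsmul_le_sum _ _ _ fun i hi => hK i (mem_sdiff.1 hi).1
  have hA' : #A • (a + b) ≤ ∑ i ∈ A, f i := card_nsmul_le_sum _ _ _ hA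
  have hcard : (#(K \ A) : ℝ) + #A = #K := by exact_mod_cast card_sdiff_add_card_eq_card hAK
  calc (#A : ℝ) * a + #K * b = #(K \ A) • b + #A • (a + b) := by
        simp only [nsmul_eq_mul, ← hcard]; ring
    _ ≤ ∑ i ∈ K \ A, f i + ∑ i ∈ A, f i := add_le_add hKA hA'
    _ = ∑ i ∈ K, f i := sum_sdiff hAK
    _ ≤ ∑ i, f i := sum_le_univ_sum_of_nonneg hf

theorem le_of_load_bound_of_cover_bound {a n k m T L ε : ℝ} (hL : 0 < L) (hε : 0 < ε)
    (ha : 0 ≤ a) (hLT : L ≤ ε * T) (hload : a * T + k * (1 / ε * L) ≤ L * m)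
    (hcover : ε * m ≤ n + k) : a ≤ n := by
  have hscaled : a * L + k * L ≤ L * (ε * m) :=
    calc a * L + k * L ≤ a * (ε * T) + k * L := by gcongr
      _ = ε * (a * T + k * (1 / ε * L)) := by field_simp
      _ ≤ ε * (L * m) := by gcongr
      _ = L * (ε * m) := by ring
  have : L * a ≤ L * n := by linarith [mul_le_mul_of_nonneg_left hcover hL.le]
  exact le_of_mul_le_mul_left this hL

theorem halls_condition_general {Mach J : Type*} [Fintype Mach]
    [Fintype J] [DecidableEq Mach]
    (p : Mach → J → ℝ) (hp : ∀ i j, 0 ≤ p i j)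
    (α : J → Mach) (T L ε : ℝ)
    (hL : 0 < L) (hLT : L ≤ T)
    (hε0 : 0 < ε) (hεLT : L / T ≤ ε)
    (hfeas : ∀ j : J, ε * (Fintype.card Mach : ℝ)
      ≤ ((Finset.univ.filter (fun i => p i j ≤ T)).card : ℝ))
    (havg : (∑ i, mload p α i) / (Fintype.card Mach : ℝ) = L)
    (jmax : Mach → J) :
    ∀ A : Finset Mach,
      A ⊆ Finset.univ.filter (fun i => T + (1 / ε) * L < mload p α i) →
      A.card ≤ (A.biUnion (fun i => Finset.univ.filter
        (fun i' => mload p α i' ≤ (1 / ε) * L ∧ p i' (jmax i) ≤ T))).card := by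
  intro A hA
  obtain rfl | ⟨i₀, hi₀⟩ := A.eq_empty_or_nonempty
  · simp
  set N := A.biUnion fun i => univ.filter fun i' => mload p α i' ≤ 1 / ε * L ∧ p i' (jmax i) ≤ T
  set K := univ.filter fun i => ¬ mload p α i ≤ 1 / ε * L
  have hLεT : L ≤ ε * T := (div_le_iff₀ (hL.trans_le hLT)).1 hεLT
  have hm : (Fintype.card Mach : ℝ) ≠ 0 := by
    rintro h
    rw [h, div_zero] at havg
    exact hL.ne havg
  have hbad : ∀ i ∈ A, T + 1 / ε * L < mload p α i := fun i hi => (mem_filter.1 (hA hi)).2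
  have hAK : A ⊆ K := fun i hi => mem_filter.2 ⟨mem_univ _, fun h => by
    linarith [hbad i hi, hL.trans_le hLT]⟩
  have hload : #A * T + #K * (1 / ε * L) ≤ L * Fintype.card Mach := by
    rw [← (div_eq_iff hm).1 havg]
    exact card_mul_add_card_mul_le_sum (mload_nonneg hp α) hAK (fun i hi => (hbad i hi).le)
      fun i hi => (not_le.1 (mem_filter.1 hi).2).le
  have hlegal : univ.filter (fun i => p i (jmax i₀) ≤ T) ⊆ N ∪ K := fun i hi => by
    by_cases hgood : mload p α i ≤ 1 / ε * L
    · exact mem_union_left _ <|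
        mem_biUnion.2 ⟨i₀, hi₀, mem_filter.2 ⟨mem_univ _, hgood, (mem_filter.1 hi).2⟩⟩
    · exact mem_union_right _ (mem_filter.2 ⟨mem_univ _, hgood⟩)
  have hcover : ε * Fintype.card Mach ≤ #N + #K := (hfeas (jmax i₀)).trans <| by
    exact_mod_cast (card_le_card hlegal).trans (card_union_le N K)
  exact_mod_cast le_of_load_bound_of_cover_bound hL hε0 (Nat.cast_nonneg _) hLεT hload hcover

/-- Hall's condition. Suppose `α` has makespan at most `2T` and
average machine load `L`, `0 < L ≤ T`, feasibility factor `ε ∈ (0,1]` with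
`ε ≥ L/T`, and for every machine `i ∈ Bad(α,1/ε)` the job `jmax i` is a job
assigned to `i` of maximum processing time on `i`.  Then for every subset `A`
of `Bad(α,1/ε)`, the neighborhood `N(A) = ⋃_{i∈A} Good_{jmax i}(α,1/ε)`
satisfies `|N(A)| ≥ |A|`. -/
theorem halls_condition {Mach J : Type*} [Fintype Mach] [Nonempty Mach]
    [Fintype J] [DecidableEq Mach]
    (p : Mach → J → ℝ) (hp : ∀ i j, 0 ≤ p i j)
    (α : J → Mach) (T L ε : ℝ)
    (hL : 0 < L) (hLT : L ≤ T)
    (hε0 : 0 < ε) (hε1 : ε ≤ 1) (hεLT : L / T ≤ ε)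
    (hfeas : ∀ j : J, ε * (Fintype.card Mach : ℝ)
      ≤ ((Finset.univ.filter (fun i => p i j ≤ T)).card : ℝ))
    (hmak : ∀ i, mload p α i ≤ 2 * T)
    (havg : (∑ i, mload p α i) / (Fintype.card Mach : ℝ) = L)
    (jmax : Mach → J)
    (hjmax : ∀ i, T + (1 / ε) * L < mload p α i →
      α (jmax i) = i ∧ ∀ j, α j = i → p i j ≤ p i (jmax i)) :
    ∀ A : Finset Mach,
      A ⊆ Finset.univ.filter (fun i => T + (1 / ε) * L < mload p α i) →
      A.card ≤ (A.biUnion (fun i => Finset.univ.filter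
        (fun i' => mload p α i' ≤ (1 / ε) * L ∧ p i' (jmax i) ≤ T))).card :=
  halls_condition_general p hp α T L ε hL hLT hε0 hεLT hfeas havg jmax
end

section
/- Let α be an assignment of jobs to machines whose makespan is at most 2T and whose average machine load equals L, where 0 < L ≤ T. Suppose the instance has feasibility factor ε ∈ (0,1] with respect to T and ε ≥ L/T. For each machine i ∈ Bad(α,1/ε), let j_max^i denote a job assigned to i of maximum processing time on i. Then there exists an injective map μ : Bad(α,1/ε) → Good(α,1/ε) such that for every i ∈ Bad(α,1/ε), the machine μ(i) is legal for the job j_max^i. -/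
/-!
Put `c = L / ε`, so that `c ≤ T` and `L * m = c * (ε * m)`. Charge every machine `c` for being
not good (load `> c`) and another `c` for being bad (load `> T + c ≥ 2c`): the charges stay below
the loads, whose total is `L * m`, hence `#NotGood + #Bad ≤ ε * m`. The job `jmax i` has at least
`ε * m` legal machines, of which at most `#NotGood` are not good, so every bad machine has at least
`#Bad` good legal candidates, and Hall's condition holds trivially.
-/

open Finset

theorem Finset.exists_injOn_mem_of_card_le {ι α : Type*} [DecidableEq α] [Nonempty α]
    (s : Finset ι) (t : ι → Finset α) (h : ∀ i ∈ s, #s ≤ #(t i)) :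
    ∃ f : ι → α, Set.InjOn f s ∧ ∀ i ∈ s, f i ∈ t i := by
  classical
  have hall (u : Finset s) : #u ≤ #(u.biUnion fun i => t i) := by
    obtain rfl | ⟨i, hi⟩ := u.eq_empty_or_nonempty
    · simp
    calc #u ≤ #s := (card_le_univ u).trans (Fintype.card_coe s).le
      _ ≤ #(t i) := h i i.2
      _ ≤ #(u.biUnion fun i => t i) := card_le_card (subset_biUnion_of_mem (fun i : s => t i) hi)
  obtain ⟨f, hf, hft⟩ := (all_card_le_biUnion_card_iff_exists_injective _).mp hall
  refine ⟨fun i => if hi : i ∈ s then f ⟨i, hi⟩ else Classical.arbitrary α, ?_, ?_⟩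
  · intro i hi j hj hij
    simp only [mem_coe] at hi hj
    simp only [hi, hj, dite_true] at hij
    exact congrArg Subtype.val (hf hij)
  · intro i hi
    simpa [hi] using hft ⟨i, hi⟩

theorem Finset.mul_card_filter_lt_add_card_filter_lt_le_sum {ι K : Type*} [Field K]
    [LinearOrder K] [IsStrictOrderedRing K] (s : Finset ι) (f : ι → K) (hf : ∀ i ∈ s, 0 ≤ f i)
    {c d : K} (hc : 0 ≤ c) (hcd : c ≤ d) :
    c * (#{i ∈ s | c < f i} + #{i ∈ s | d + c < f i}) ≤ ∑ i ∈ s, f i := by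
  simp only [natCast_card_filter, mul_add, mul_sum, ← sum_add_distrib]
  refine sum_le_sum fun i hi => ?_
  have := hf i hi
  split_ifs <;> linarith

theorem Finset.card_filter_le_card_filter_and_not_add_card_filter {ι : Type*} (s : Finset ι)
    (P Q : ι → Prop) [DecidablePred P] [DecidablePred Q] :
    #{i ∈ s | P i} ≤ #{i ∈ s | P i ∧ ¬ Q i} + #{i ∈ s | Q i} := by
  have hsplit := card_filter_add_card_filter_not (s := {i ∈ s | P i}) Q
  rw [filter_filter, filter_filter] at hsplit
  have : #{i ∈ s | P i ∧ Q i} ≤ #{i ∈ s | Q i} :=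
    card_le_card (monotone_filter_right s fun _ _ h => h.2)
  omega

theorem exists_matching_general {Mach J : Type*} [Fintype Mach] [Nonempty Mach]
    [Fintype J] [DecidableEq Mach]
    (p : Mach → J → ℝ) (hp : ∀ i j, 0 ≤ p i j)
    (α : J → Mach) (T L ε : ℝ)
    (hL : 0 < L) (hLT : L ≤ T)
    (hε0 : 0 < ε) (hεLT : L / T ≤ ε)
    (hfeas : ∀ j : J, ε * (Fintype.card Mach : ℝ)
      ≤ ((Finset.univ.filter (fun i => p i j ≤ T)).card : ℝ))
    (havg : (∑ i, mload p α i) / (Fintype.card Mach : ℝ) = L)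
    (jmax : Mach → J) :
    ∃ μ : Mach → Mach,
      Set.InjOn μ {i | T + (1 / ε) * L < mload p α i} ∧
      ∀ i, T + (1 / ε) * L < mload p α i →
        mload p α (μ i) ≤ (1 / ε) * L ∧ p (μ i) (jmax i) ≤ T := by
  have hc : 0 < 1 / ε * L := by positivity
  have hcT : 1 / ε * L ≤ T := by
    rw [one_div_mul_eq_div]
    exact (div_le_comm₀ (hL.trans_le hLT) hε0).1 hεLT
  set c := 1 / ε * L with hc_def
  set m : ℝ := (Fintype.card Mach : ℝ)
  have hcount : (#{i | c < mload p α i} + #{i | T + c < mload p α i} : ℝ) ≤ ε * m := by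
    refine le_of_mul_le_mul_left ?_ hc
    calc _ ≤ ∑ i, mload p α i := mul_card_filter_lt_add_card_filter_lt_le_sum _ _
            (fun i _ => mload_nonneg hp α i) hc.le hcT
      _ = c * (ε * m) := by
        rw [← mul_div_cancel₀ (∑ i, mload p α i) (by positivity : m ≠ 0), havg, hc_def]
        field_simp
  obtain ⟨μ, hμ, hμt⟩ := exists_injOn_mem_of_card_le {i | T + c < mload p α i}
    (fun i => {i' | p i' (jmax i) ≤ T ∧ ¬ c < mload p α i'}) fun i _ => by
      have hlegal : (#{i' | p i' (jmax i) ≤ T} : ℝ)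
          ≤ #{i' | p i' (jmax i) ≤ T ∧ ¬ c < mload p α i'} + #{i' | c < mload p α i'} := by
        exact_mod_cast card_filter_le_card_filter_and_not_add_card_filter univ
          (fun i' => p i' (jmax i) ≤ T) (fun i' => c < mload p α i')
      suffices (#{i | T + c < mload p α i} : ℝ)
          ≤ #{i' | p i' (jmax i) ≤ T ∧ ¬ c < mload p α i'} by exact_mod_cast this
      linarith [hfeas (jmax i)]
  refine ⟨μ, by simpa using hμ, fun i hi => ?_⟩
  simpa [and_comm] using hμt i (by simpa using hi)

/-- Perfect matching of bad machines into good machines. Under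
makespan at most `2T`, average machine load `L` with `0 < L ≤ T`, feasibility
factor `ε ∈ (0,1]` with `ε ≥ L/T`, and `jmax i` a maximum-processing-time job
assigned to each bad machine `i`, there is an injective map `μ` from
`Bad(α,1/ε)` into `Good(α,1/ε)` such that `μ i` is legal for the job `jmax i`
for every bad machine `i`. -/
theorem exists_matching {Mach J : Type*} [Fintype Mach] [Nonempty Mach]
    [Fintype J] [DecidableEq Mach]
    (p : Mach → J → ℝ) (hp : ∀ i j, 0 ≤ p i j)
    (α : J → Mach) (T L ε : ℝ)
    (hL : 0 < L) (hLT : L ≤ T)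
    (hε0 : 0 < ε) (hε1 : ε ≤ 1) (hεLT : L / T ≤ ε)
    (hfeas : ∀ j : J, ε * (Fintype.card Mach : ℝ)
      ≤ ((Finset.univ.filter (fun i => p i j ≤ T)).card : ℝ))
    (hmak : ∀ i, mload p α i ≤ 2 * T)
    (havg : (∑ i, mload p α i) / (Fintype.card Mach : ℝ) = L)
    (jmax : Mach → J)
    (hjmax : ∀ i, T + (1 / ε) * L < mload p α i →
      α (jmax i) = i ∧ ∀ j, α j = i → p i j ≤ p i (jmax i)) :
    ∃ μ : Mach → Mach,
      Set.InjOn μ {i | T + (1 / ε) * L < mload p α i} ∧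
      ∀ i, T + (1 / ε) * L < mload p α i →
        mload p α (μ i) ≤ (1 / ε) * L ∧ p (μ i) (jmax i) ≤ T :=
  exists_matching_general p hp α T L ε hL hLT hε0 hεLT hfeas havg jmax
end

section
/- Let α be an assignment of jobs to machines whose makespan is at most 2T and whose average machine load equals L, where 0 < L ≤ T, let ε ∈ (0,1] with ε ≥ L/T, and for each i ∈ Bad(α,1/ε) let j_max^i be a job assigned to i of maximum processing time on i. Suppose that for every machine i, Σ_{j : α(j)=i, j ≠ j_max^i} p_{ij} ≤ T, and suppose μ : Bad(α,1/ε) → Good(α,1/ε) is an injective map such that p_{μ(i), j_max^i} ≤ T for every i ∈ Bad(α,1/ε). Define the assignment β by β(j_max^i) = μ(i) for every i ∈ Bad(α,1/ε) and β(j) = α(j) for all other jobs. Then the makespan of β is at most T + L/ε. -/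
/-!
A machine that receives no job under `β` keeps a subset of its `α`-jobs: if it is bad it has
also lost `jmax i`, so its load is at most `T`; otherwise its load was already at most `T + L/ε`.
By injectivity of `μ`, a machine `μ i₀` that receives a job receives only `jmax i₀`, which costs
at most `T` there, on top of its old load of at most `L/ε`.
-/

open Finset

theorem Finset.sum_insert_le_add {ι M : Type*} [DecidableEq ι] [AddCommMonoid M] [PartialOrder M]
    [IsOrderedAddMonoid M] {f : ι → M} (s : Finset ι) {a : ι} (ha : 0 ≤ f a) :
    ∑ x ∈ insert a s, f x ≤ f a + ∑ x ∈ s, f x := by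
  by_cases h : a ∈ s
  · rw [insert_eq_of_mem h]
    exact le_add_of_nonneg_left ha
  · rw [sum_insert h]

section Reassignment

variable {Mach J : Type*}

structure IsJobMove (α β : J → Mach) (bad : Mach → Prop) (jmax : Mach → J) (μ : Mach → Mach) :
    Prop where
  moved : ∀ i, bad i → β (jmax i) = μ i
  fixed : ∀ j, (∀ i, bad i → j ≠ jmax i) → β j = α j

theorem mload_le_sum_of_forall_mem [Fintype J] [DecidableEq Mach] {p : Mach → J → ℝ}
    {β : J → Mach} {i : Mach} (hp : ∀ j, 0 ≤ p i j) {s : Finset J} (h : ∀ j, β j = i → j ∈ s) :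
    mload p β i ≤ ∑ j ∈ s, p i j :=
  sum_le_sum_of_subset_of_nonneg (fun j hj => h j (mem_filter.1 hj).2) fun j _ _ => hp j

namespace IsJobMove

variable {α β : J → Mach} {bad : Mach → Prop} {jmax : Mach → J} {μ : Mach → Mach}

theorem unmoved_of_not_target (h : IsJobMove α β bad jmax μ) {i : Mach}
    (hi : ∀ i', bad i' → μ i' ≠ i) {j : J} (hj : β j = i) :
    α j = i ∧ ∀ i', bad i' → j ≠ jmax i' := by
  have hunmoved : ∀ i', bad i' → j ≠ jmax i' := by
    rintro i' hi' rfl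
    exact hi i' hi' ((h.moved i' hi').symm.trans hj)
  exact ⟨h.fixed j hunmoved ▸ hj, hunmoved⟩

theorem eq_jmax_or_of_target (h : IsJobMove α β bad jmax μ) (hinj : Set.InjOn μ {i | bad i})
    {i₀ : Mach} (hi₀ : bad i₀) {j : J} (hj : β j = μ i₀) : j = jmax i₀ ∨ α j = μ i₀ := by
  by_cases hunmoved : ∀ i, bad i → j ≠ jmax i
  · exact .inr (h.fixed j hunmoved ▸ hj)
  · push Not at hunmoved
    obtain ⟨i, hi, rfl⟩ := hunmoved
    exact .inl (congrArg jmax (hinj hi hi₀ ((h.moved i hi).symm.trans hj)))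

variable [Fintype J] [DecidableEq Mach] {p : Mach → J → ℝ}

theorem mload_le_of_not_target (h : IsJobMove α β bad jmax μ) {i : Mach} (hp : ∀ j, 0 ≤ p i j)
    (hi : ∀ i', bad i' → μ i' ≠ i) : mload p β i ≤ mload p α i :=
  mload_le_sum_of_forall_mem hp fun j hj =>
    mem_filter.2 ⟨mem_univ j, (h.unmoved_of_not_target hi hj).1⟩

theorem mload_le_sum_ne_jmax [DecidableEq J] (h : IsJobMove α β bad jmax μ) {i : Mach}
    (hp : ∀ j, 0 ≤ p i j) (hbad : bad i) (hi : ∀ i', bad i' → μ i' ≠ i) :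
    mload p β i ≤ ∑ j ∈ univ.filter (fun j => α j = i ∧ j ≠ jmax i), p i j :=
  mload_le_sum_of_forall_mem hp fun j hj =>
    have hunmoved := h.unmoved_of_not_target hi hj
    mem_filter.2 ⟨mem_univ j, hunmoved.1, hunmoved.2 i hbad⟩

theorem mload_target_le [DecidableEq J] (h : IsJobMove α β bad jmax μ)
    (hinj : Set.InjOn μ {i | bad i}) {i₀ : Mach} (hp : ∀ j, 0 ≤ p (μ i₀) j) (hi₀ : bad i₀) :
    mload p β (μ i₀) ≤ p (μ i₀) (jmax i₀) + mload p α (μ i₀) :=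
  calc mload p β (μ i₀) ≤ ∑ j ∈ insert (jmax i₀) (univ.filter fun j => α j = μ i₀), p (μ i₀) j :=
        mload_le_sum_of_forall_mem hp fun j hj => by
          simpa using h.eq_jmax_or_of_target hinj hi₀ hj
    _ ≤ p (μ i₀) (jmax i₀) + mload p α (μ i₀) := sum_insert_le_add _ (hp _)

end IsJobMove

end Reassignment

theorem moved_assignment_makespan_general {Mach J : Type*}
    [Fintype J] [DecidableEq Mach] [DecidableEq J]
    (p : Mach → J → ℝ) (hp : ∀ i j, 0 ≤ p i j)
    (α : J → Mach) (T L ε : ℝ)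
    (hL : 0 < L)
    (hε0 : 0 < ε)
    (jmax : Mach → J)
    (hST : ∀ i, ∑ j ∈ Finset.univ.filter (fun j => α j = i ∧ j ≠ jmax i), p i j ≤ T)
    (μ : Mach → Mach)
    (hμinj : Set.InjOn μ {i | T + (1 / ε) * L < mload p α i})
    (hμ : ∀ i, T + (1 / ε) * L < mload p α i →
      mload p α (μ i) ≤ (1 / ε) * L ∧ p (μ i) (jmax i) ≤ T)
    (β : J → Mach)
    (hβmoved : ∀ i, T + (1 / ε) * L < mload p α i → β (jmax i) = μ i)
    (hβfixed : ∀ j : J, (∀ i, T + (1 / ε) * L < mload p α i → j ≠ jmax i) →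
      β j = α j) :
    ∀ i, mload p β i ≤ T + L / ε := by
  intro i
  have hmove : IsJobMove α β (fun i => T + (1 / ε) * L < mload p α i) jmax μ :=
    ⟨hβmoved, hβfixed⟩
  rw [div_eq_mul_one_div, mul_comm]
  have hLε : 0 ≤ 1 / ε * L := by positivity
  by_cases htarget : ∃ i₀, T + (1 / ε) * L < mload p α i₀ ∧ μ i₀ = i
  · obtain ⟨i₀, hi₀, rfl⟩ := htarget
    have hload := hmove.mload_target_le hμinj (hp _) hi₀
    linarith [hμ i₀ hi₀]
  push Not at htarget
  by_cases hbad : T + (1 / ε) * L < mload p α i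
  · calc mload p β i ≤ ∑ j ∈ univ.filter (fun j => α j = i ∧ j ≠ jmax i), p i j :=
          hmove.mload_le_sum_ne_jmax (hp i) hbad htarget
      _ ≤ T + 1 / ε * L := by linarith [hST i]
  · exact (hmove.mload_le_of_not_target (hp i) htarget).trans (not_lt.1 hbad)

/-- Let `α` have makespan at most `2T` and average machine load
`L`, `0 < L ≤ T`, `ε ∈ (0,1]` with `ε ≥ L/T`, and let `jmax i` be a
maximum-processing-time job assigned to each bad machine `i ∈ Bad(α,1/ε)`.
Suppose that for every machine `i` the total processing time on `i` of the
jobs assigned to `i` other than `jmax i` is at most `T`, and `μ` is an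
injective map from `Bad(α,1/ε)` into `Good(α,1/ε)` with
`p (μ i) (jmax i) ≤ T` for every bad `i`.  Define `β` by moving, for each bad
machine `i`, the job `jmax i` to machine `μ i`, leaving all other jobs where
`α` put them.  Then the makespan of `β` is at most `T + L/ε`. -/
theorem moved_assignment_makespan {Mach J : Type*} [Fintype Mach] [Nonempty Mach]
    [Fintype J] [DecidableEq Mach] [DecidableEq J]
    (p : Mach → J → ℝ) (hp : ∀ i j, 0 ≤ p i j)
    (α : J → Mach) (T L ε : ℝ)
    (hL : 0 < L) (hLT : L ≤ T)
    (hε0 : 0 < ε) (hε1 : ε ≤ 1) (hεLT : L / T ≤ ε)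
    (hmak : ∀ i, mload p α i ≤ 2 * T)
    (havg : (∑ i, mload p α i) / (Fintype.card Mach : ℝ) = L)
    (jmax : Mach → J)
    (hjmax : ∀ i, T + (1 / ε) * L < mload p α i →
      α (jmax i) = i ∧ ∀ j, α j = i → p i j ≤ p i (jmax i))
    (hST : ∀ i, ∑ j ∈ Finset.univ.filter (fun j => α j = i ∧ j ≠ jmax i), p i j ≤ T)
    (μ : Mach → Mach)
    (hμinj : Set.InjOn μ {i | T + (1 / ε) * L < mload p α i})
    (hμ : ∀ i, T + (1 / ε) * L < mload p α i →
      mload p α (μ i) ≤ (1 / ε) * L ∧ p (μ i) (jmax i) ≤ T)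
    (β : J → Mach)
    (hβmoved : ∀ i, T + (1 / ε) * L < mload p α i → β (jmax i) = μ i)
    (hβfixed : ∀ j : J, (∀ i, T + (1 / ε) * L < mload p α i → j ≠ jmax i) →
      β j = α j) :
    ∀ i, mload p β i ≤ T + L / ε :=
  moved_assignment_makespan_general p hp α T L ε hL hε0 jmax hST μ hμinj hμ β hβmoved hβfixed
end

section
/- Let β be a w-feasible assignment of a restricted instance with feasibility factor ε ∈ (0,1], where w ≥ max_j p_j, and let L = (Σ_{j∈J} p_j)/m. If a machine v satisfies δ_v(β) > w + L/ε, then there exists a machine i reachable from v by a directed path in the graph G_β(w) with δ_i(β) ≤ L/ε. Equivalently, there is no machine with load exceeding w + L/ε all of whose reachable machines in G_β(w) have load exceeding L/ε. -/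
/-- The load of machine `i` under assignment `β` in a restricted instance
with processing times `p j`. -/
noncomputable def rload {Mach J : Type*} [Fintype J] [DecidableEq Mach]
    (p : J → ℝ) (β : J → Mach) (i : Mach) : ℝ :=
  ∑ j ∈ Finset.univ.filter (fun j => β j = i), p j

/-- One machine-to-machine step in the directed bipartite graph `G_β(w)`:
there is a job `j` assigned to machine `a` (arc `a → j`) such that machine
`b ≠ a` is feasible for `j` and `p j ≤ w` (arc `j → b`). -/
def rstep {Mach J : Type*} (p : J → ℝ) (F : J → Finset Mach) (w : ℝ)
    (β : J → Mach) (a b : Mach) : Prop :=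
  ∃ j, β j = a ∧ b ∈ F j ∧ p j ≤ w ∧ b ≠ a

/-!
If `v` itself is light there is nothing to do. Otherwise some job `j` sits on `v`, and every
machine of `F j` is reachable from `v`, so at least `ε m` machines are reachable. The reachable
machines carry at most the total processing time `m L` between them, so one of them has load at
most `m L / (ε m) = L / ε`.
-/

open Finset Relation

section Loads

variable {Mach J : Type*} [Fintype J] [DecidableEq Mach] (p : J → ℝ) (β : J → Mach)

theorem exists_eq_of_rload_ne_zero {i : Mach} (h : rload p β i ≠ 0) : ∃ j, β j = i := by
  obtain ⟨j, hj, -⟩ := exists_ne_zero_of_sum_ne_zero h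
  exact ⟨j, (mem_filter.1 hj).2⟩

theorem sum_rload_le_sum (hp : ∀ j, 0 ≤ p j) (s : Finset Mach) :
    ∑ i ∈ s, rload p β i ≤ ∑ j, p j :=
  calc ∑ i ∈ s, rload p β i = ∑ j ∈ univ.filter (fun j => β j ∈ s), p j :=
        sum_fiberwise_eq_sum_filter univ s β p
    _ ≤ ∑ j, p j := sum_le_sum_of_subset_of_nonneg (filter_subset _ _) fun j _ _ => hp j

theorem exists_rload_le_sum_div_card (hp : ∀ j, 0 ≤ p j) {s : Finset Mach} (hs : s.Nonempty) :
    ∃ i ∈ s, rload p β i ≤ (∑ j, p j) / s.card := by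
  apply exists_le_of_sum_le hs
  rw [sum_const, nsmul_eq_mul, mul_div_cancel₀ _ (Nat.cast_ne_zero.2 hs.card_ne_zero)]
  exact sum_rload_le_sum p β hp s

end Loads

theorem reflTransGen_rstep_of_mem {Mach J : Type*} {p : J → ℝ} {F : J → Finset Mach} {w : ℝ}
    {β : J → Mach} {v b : Mach} {j : J} (hj : p j ≤ w)
    (hv : ReflTransGen (rstep p F w β) v (β j)) (hb : b ∈ F j) :
    ReflTransGen (rstep p F w β) v b := by
  by_cases hbj : b = β j
  · exact hbj ▸ hv
  · exact hv.tail ⟨j, rfl, hb, hj, hbj⟩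

theorem heavy_machine_reaches_light_general {Mach J : Type*} [Fintype Mach]
    [Fintype J] [DecidableEq Mach]
    (p : J → ℝ) (hp : ∀ j, 0 < p j)
    (F : J → Finset Mach)
    (ε : ℝ) (hε0 : 0 < ε)
    (hfeas : ∀ j : J, ε * (Fintype.card Mach : ℝ) ≤ ((F j).card : ℝ))
    (w : ℝ) (hw : ∀ j, p j ≤ w)
    (β : J → Mach)
    (L : ℝ) (hL : L = (∑ j, p j) / (Fintype.card Mach : ℝ))
    (v : Mach) :
    ∃ i : Mach, Relation.ReflTransGen (rstep p F w β) v i ∧ rload p β i ≤ L / ε := by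
  classical
  by_cases hlight : rload p β v ≤ L / ε
  · exact ⟨v, .refl, hlight⟩
  have hsum : 0 ≤ ∑ j, p j := sum_nonneg fun j _ => (hp j).le
  have hL0 : 0 ≤ L / ε := div_nonneg (hL ▸ div_nonneg hsum (Nat.cast_nonneg _)) hε0.le
  obtain ⟨j, rfl⟩ := exists_eq_of_rload_ne_zero p β (hL0.trans_lt (not_le.1 hlight)).ne'
  set R := univ.filter (ReflTransGen (rstep p F w β) (β j))
  have hFR : F j ⊆ R := fun b hb =>
    mem_filter.2 ⟨mem_univ b, reflTransGen_rstep_of_mem (hw j) .refl hb⟩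
  have hcard : ε * Fintype.card Mach ≤ R.card :=
    (hfeas j).trans (by exact_mod_cast card_le_card hFR)
  obtain ⟨i, hiR, hi⟩ := exists_rload_le_sum_div_card p β (fun j => (hp j).le)
    ⟨β j, mem_filter.2 ⟨mem_univ _, ReflTransGen.refl⟩⟩
  have hm : 0 < ε * Fintype.card Mach :=
    mul_pos hε0 (Nat.cast_pos.2 (Fintype.card_pos_iff.2 ⟨β j⟩))
  refine ⟨i, (mem_filter.1 hiR).2, hi.trans ?_⟩
  rw [hL, div_div, mul_comm]
  exact div_le_div_of_nonneg_left hsum hm hcard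

/-- In a restricted instance with feasibility factor `ε ∈ (0,1]`,
let `β` be a `w`-feasible assignment with `w ≥ max_j p_j` and
`L = (Σ_j p_j)/m`.  If machine `v` has load `> w + L/ε`, then some machine `i`
reachable from `v` in `G_β(w)` has load at most `L/ε`. -/
theorem heavy_machine_reaches_light {Mach J : Type*} [Fintype Mach] [Nonempty Mach]
    [Fintype J] [Nonempty J] [DecidableEq Mach]
    (p : J → ℝ) (hp : ∀ j, 0 < p j)
    (F : J → Finset Mach) (hF : ∀ j, (F j).Nonempty)
    (ε : ℝ) (hε0 : 0 < ε) (hε1 : ε ≤ 1)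
    (hfeas : ∀ j : J, ε * (Fintype.card Mach : ℝ) ≤ ((F j).card : ℝ))
    (w : ℝ) (hw : ∀ j, p j ≤ w)
    (β : J → Mach) (hβ : ∀ j, β j ∈ F j)
    (L : ℝ) (hL : L = (∑ j, p j) / (Fintype.card Mach : ℝ))
    (v : Mach) (hv : w + L / ε < rload p β v) :
    ∃ i : Mach, Relation.ReflTransGen (rstep p F w β) v i ∧ rload p β i ≤ L / ε :=
  heavy_machine_reaches_light_general p hp F ε hε0 hfeas w hw β L hL v
end

section
/- For every restricted instance of scheduling with feasibility factor ε ∈ (0,1], letting p_max = max_j p_j and L = (Σ_{j∈J} p_j)/m, there exists a feasible assignment β (i.e., β(j) ∈ F_j for every job j) whose makespan is at most p_max + L/ε. -/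
open Finset

noncomputable def loadOn {Mach J : Type*} [DecidableEq Mach]
    (S : Finset J) (p : J → ℝ) (β : J → Mach) (i : Mach) : ℝ :=
  ∑ j ∈ S.filter (fun j => β j = i), p j

lemma exists_mem_card_mul_le_sum {ι : Type*} [Fintype ι] {f : ι → ℝ} (hf : ∀ i, 0 ≤ f i)
    {A : Finset ι} (hA : A.Nonempty) : ∃ i ∈ A, #A * f i ≤ ∑ i, f i := by
  obtain ⟨i₀, hi₀, hmin⟩ := exists_min_image A f hA
  refine ⟨i₀, hi₀, ?_⟩
  calc #A * f i₀ = ∑ _i ∈ A, f i₀ := by rw [sum_const, nsmul_eq_mul]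
    _ ≤ ∑ i ∈ A, f i := sum_le_sum hmin
    _ ≤ ∑ i, f i := sum_le_sum_of_subset_of_nonneg (subset_univ A) fun i _ _ => hf i

section Greedy

variable {Mach J : Type*} [DecidableEq Mach]

lemma loadOn_nonneg {p : J → ℝ} (hp : ∀ j, 0 ≤ p j) (S : Finset J) (β : J → Mach) (i : Mach) :
    0 ≤ loadOn S p β i :=
  sum_nonneg fun j _ => hp j

lemma sum_loadOn [Fintype Mach] (S : Finset J) (p : J → ℝ) (β : J → Mach) :
    ∑ i, loadOn S p β i = ∑ j ∈ S, p j :=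
  sum_fiberwise S β p

lemma loadOn_insert_update [DecidableEq J] {S : Finset J} {a : J} (ha : a ∉ S) (p : J → ℝ)
    (β : J → Mach) (i₀ i : Mach) :
    loadOn (insert a S) p (Function.update β a i₀) i =
      loadOn S p β i + if i₀ = i then p a else 0 := by
  have hS : S.filter (fun j => Function.update β a i₀ j = i) = S.filter (fun j => β j = i) :=
    filter_congr fun j hj => by rw [Function.update_of_ne (ne_of_mem_of_not_mem hj ha)]
  have ha' : a ∉ S.filter (fun j => β j = i) := fun h => ha (mem_of_mem_filter a h)
  unfold loadOn
  rw [filter_insert, Function.update_self, hS]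
  split_ifs <;> simp [sum_insert ha', add_comm]

lemma exists_feasible_loadOn_le [Fintype Mach] [DecidableEq J] {p : J → ℝ} (hp : ∀ j, 0 ≤ p j)
    {F : J → Finset Mach} {k : ℝ} (hk : 0 < k) (hFk : ∀ j, k ≤ #(F j))
    {c : ℝ} (hc₀ : 0 ≤ c) (hc : ∀ j, p j ≤ c) (S : Finset J) :
    ∃ β : J → Mach, (∀ j, β j ∈ F j) ∧ ∀ i, loadOn S p β i ≤ c + (∑ j ∈ S, p j) / k := by
  have hF : ∀ j, (F j).Nonempty := fun j => card_pos.1 (by exact_mod_cast hk.trans_le (hFk j))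
  induction S using Finset.induction_on with
  | empty =>
    exact ⟨fun j => (hF j).choose, fun j => (hF j).choose_spec, fun i => by simp [loadOn, hc₀]⟩
  | @insert a S ha ih =>
    obtain ⟨β, hβF, hβ⟩ := ih
    obtain ⟨i₀, hi₀F, hi₀⟩ := exists_mem_card_mul_le_sum (loadOn_nonneg hp S β) (hF a)
    have hi₀k : loadOn S p β i₀ ≤ (∑ j ∈ S, p j) / k := by
      rw [le_div_iff₀ hk, ← sum_loadOn S p β]
      calc loadOn S p β i₀ * k ≤ loadOn S p β i₀ * #(F a) :=
            mul_le_mul_of_nonneg_left (hFk a) (loadOn_nonneg hp S β i₀)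
        _ ≤ ∑ i, loadOn S p β i := by rw [mul_comm]; exact hi₀
    have hgrow : (∑ j ∈ S, p j) / k ≤ (∑ j ∈ insert a S, p j) / k := by
      rw [sum_insert ha]
      gcongr
      linarith [hp a]
    refine ⟨Function.update β a i₀, fun j => ?_, fun i => ?_⟩
    · rcases eq_or_ne j a with rfl | hja
      · simpa using hi₀F
      · simpa [Function.update_of_ne hja] using hβF j
    · rw [loadOn_insert_update ha]
      split_ifs with hi
      · subst hi
        linarith [hc a]
      · linarith [hβ i]

end Greedy

theorem exists_balanced_assignment_general {Mach J : Type*} [Fintype Mach] [Nonempty Mach]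
    [Fintype J] [DecidableEq Mach]
    (p : J → ℝ) (hp : ∀ j, 0 < p j)
    (F : J → Finset Mach)
    (ε : ℝ) (hε0 : 0 < ε)
    (hfeas : ∀ j : J, ε * (Fintype.card Mach : ℝ) ≤ ((F j).card : ℝ))
    (pmax : ℝ) (hpmax1 : ∀ j, p j ≤ pmax) (hpmax2 : ∃ j, p j = pmax)
    (L : ℝ) (hL : L = (∑ j, p j) / (Fintype.card Mach : ℝ)) :
    ∃ β : J → Mach, (∀ j, β j ∈ F j) ∧ ∀ i, rload p β i ≤ pmax + L / ε := by
  classical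
  have hk : 0 < ε * Fintype.card Mach := mul_pos hε0 (by exact_mod_cast Fintype.card_pos)
  have hpmax : 0 ≤ pmax := by
    obtain ⟨j, rfl⟩ := hpmax2
    exact (hp j).le
  obtain ⟨β, hβF, hβ⟩ :=
    exists_feasible_loadOn_le (fun j => (hp j).le) hk hfeas hpmax hpmax1 univ
  refine ⟨β, hβF, fun i => ?_⟩
  rw [hL, div_div, mul_comm (Fintype.card Mach : ℝ)]
  exact hβ i

/-- For every restricted instance with feasibility factor
`ε ∈ (0,1]`, where `pmax = max_j p_j` and `L = (Σ_j p_j)/m`, there exists a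
feasible assignment `β` whose makespan is at most `pmax + L/ε`. -/
theorem exists_balanced_assignment {Mach J : Type*} [Fintype Mach] [Nonempty Mach]
    [Fintype J] [Nonempty J] [DecidableEq Mach]
    (p : J → ℝ) (hp : ∀ j, 0 < p j)
    (F : J → Finset Mach) (hF : ∀ j, (F j).Nonempty)
    (ε : ℝ) (hε0 : 0 < ε) (hε1 : ε ≤ 1)
    (hfeas : ∀ j : J, ε * (Fintype.card Mach : ℝ) ≤ ((F j).card : ℝ))
    (pmax : ℝ) (hpmax1 : ∀ j, p j ≤ pmax) (hpmax2 : ∃ j, p j = pmax)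
    (L : ℝ) (hL : L = (∑ j, p j) / (Fintype.card Mach : ℝ)) :
    ∃ β : J → Mach, (∀ j, β j ∈ F j) ∧ ∀ i, rload p β i ≤ pmax + L / ε :=
  exists_balanced_assignment_general p hp F ε hε0 hfeas pmax hpmax1 hpmax2 L hL
end
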